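/- Let M be an algebraic monoid with a zero element 0 ∈ M whose unit group is dense in M. Then every irreducible component of M contains 0. -/

import Mathlib

open CategoryTheory CategoryTheory.Limits AlgebraicGeometry MonoidalCategory

noncomputable section

universe u

variable (k : Type u) [Field k] [IsAlgClosed k]

/-- The base scheme `Spec k`. -/
def SpecK : Scheme.{u} := Spec (CommRingCat.of k)

/-- The category of schemes over `Spec k`. -/
abbrev SchK := Over (SpecK k)

instance : HasBinaryProducts (SchK k) :=
  Over.ConstructProducts.over_binaryProduct_of_pullback

attribute [local instance 2000] CartesianMonoidalCategory.ofHasFiniteProducts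

variable {k}

/-- A scheme over `k` is a variety if it is separated, of finite type and reduced. -/
class IsVariety (V : SchK k) : Prop where
  locallyOfFiniteType : LocallyOfFiniteType V.hom
  quasiCompact : QuasiCompact V.hom
  separated : AlgebraicGeometry.IsSeparated V.hom
  reduced : IsReduced V.left

/-- `k`-rational points of a `k`-scheme. -/
abbrev kpt (V : SchK k) := 𝟙_ (SchK k) ⟶ V

/-- The topological point underlying a `k`-rational point. -/
def basePt {V : SchK k} (x : kpt V) : V.left :=
  ((terminal.from (Over.mk (𝟙 (SpecK k))) ≫ x).left).base (default : PrimeSpectrum k)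

/-- An algebraic monoid over `k`: a monoid object in `k`-schemes whose underlying
scheme is a variety. -/
structure AlgMonoid (k : Type u) [Field k] [IsAlgClosed k] where
  toMon : Mon (SchK k)
  isVariety : IsVariety toMon.X

namespace AlgMonoid

variable (M : AlgMonoid k)

/-- Product of two `k`-points of an algebraic monoid. -/
def ptMul (x y : kpt M.toMon.X) : kpt M.toMon.X := prod.lift x y ≫ M.toMon.mon.mul

/-- The unit `k`-point. -/
def ptOne : kpt M.toMon.X := M.toMon.mon.one

/-- A `k`-point is a unit if it has a two-sided inverse. -/
def IsUnitPt (x : kpt M.toMon.X) : Prop :=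
  ∃ y, M.ptMul x y = M.ptOne ∧ M.ptMul y x = M.ptOne

/-- The set of unit points, as a subset of the underlying space: the unit group `G(M)`. -/
def unitSet : Set M.toMon.X.left := { p | ∃ x, M.IsUnitPt x ∧ basePt x = p }

/-- A `k`-point is a zero if it absorbs every point on both sides. -/
def IsZeroPt (z : kpt M.toMon.X) : Prop :=
  ∀ x, M.ptMul x z = z ∧ M.ptMul z x = z

end AlgMonoid

/-- A group object in `k`-schemes. -/
structure GrpObjK (k : Type u) [Field k] [IsAlgClosed k] where
  toMon : Mon (SchK k)
  inv : toMon.X ⟶ toMon.X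
  left_inv : prod.lift inv (𝟙 toMon.X) ≫ toMon.mon.mul = terminal.from toMon.X ≫ toMon.mon.one
  right_inv : prod.lift (𝟙 toMon.X) inv ≫ toMon.mon.mul = terminal.from toMon.X ≫ toMon.mon.one

/-- An algebraic group over `k`. -/
structure AlgGroup (k : Type u) [Field k] [IsAlgClosed k] extends GrpObjK k where
  isVariety : IsVariety toMon.X

/-- A morphism of underlying schemes is a morphism of monoid objects. -/
def IsMonHomK {M N : Mon (SchK k)} (f : M.X ⟶ N.X) : Prop :=
  M.mon.one ≫ f = N.mon.one ∧ prod.map f f ≫ N.mon.mul = M.mon.mul ≫ f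

/-- Data realizing an algebraic group `G` as the unit group of an algebraic monoid `M`:
an open immersion of `G` into `M`, compatible with the monoid structures, whose image is
exactly the set of invertible points of `M`. -/
structure UnitGroupData (M : AlgMonoid k) where
  G : AlgGroup k
  ι : G.toMon.X ⟶ M.toMon.X
  isOpenImmersion : IsOpenImmersion ι.left
  isMonHom : IsMonHomK ι
  range_eq : Set.range ι.left.base = M.unitSet

/-- A (left) regular action of a group object `G` on a `k`-scheme `V`. -/
structure GrpAction (G : GrpObjK k) (V : SchK k) where
  act : G.toMon.X ⨯ V ⟶ V
  one_act : prod.lift (terminal.from V ≫ G.toMon.mon.one) (𝟙 V) ≫ act = 𝟙 V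
  mul_act : prod.map G.toMon.mon.mul (𝟙 V) ≫ act =
    (Limits.prod.associator _ _ _).hom ≫ prod.map (𝟙 G.toMon.X) act ≫ act

/-- The action of a group element (a `k`-point) on a `k`-point. -/
def GrpAction.ptAct {G : GrpObjK k} {V : SchK k} (a : GrpAction G V)
    (g : kpt G.toMon.X) (v : kpt V) : kpt V :=
  prod.lift g v ≫ a.act

/-- An action of `G × G` on `V`, given as a pair of commuting actions of `G`. -/
structure TwoSidedAction (G : GrpObjK k) (V : SchK k) where
  l : GrpAction G V
  r : GrpAction G V
  comm : (Limits.prod.associator G.toMon.X G.toMon.X V).hom ≫ prod.map (𝟙 G.toMon.X) r.act ≫ l.act =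
    prod.map (Limits.prod.braiding G.toMon.X G.toMon.X).hom (𝟙 V) ≫
      (Limits.prod.associator G.toMon.X G.toMon.X V).hom ≫ prod.map (𝟙 G.toMon.X) l.act ≫ r.act

/-- The orbit of a `k`-point under a two-sided action, as a set of topological points. -/
def TwoSidedAction.orbitSet {G : GrpObjK k} {V : SchK k} (A : TwoSidedAction G V)
    (m : kpt V) : Set V.left :=
  { p | ∃ a b : kpt G.toMon.X, p = basePt (A.l.ptAct a (A.r.ptAct b m)) }

/-- The two-sided action of the unit group on an algebraic monoid,
`((a,b), m) ↦ a · m · b⁻¹`, encoded by its values on `k`-points. -/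
def IsUnitGroupTwoSidedAction {M : AlgMonoid k} (u : UnitGroupData M)
    (A : TwoSidedAction u.G.toGrpObjK M.toMon.X) : Prop :=
  (∀ (a : kpt u.G.toMon.X) (m : kpt M.toMon.X),
      A.l.ptAct a m = M.ptMul (a ≫ u.ι) m) ∧
  (∀ (b : kpt u.G.toMon.X) (m : kpt M.toMon.X),
      A.r.ptAct b m = M.ptMul m ((b ≫ u.G.inv) ≫ u.ι))

/-- Normality for schemes: integral with integrally closed stalks. -/
def NormalScheme (X : Scheme.{u}) : Prop :=
  IsIntegral X ∧ ∀ x : X, IsIntegrallyClosed (X.presheaf.stalk x)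

attribute [local instance] MvPolynomial.gradedAlgebra in
/-- Projective `n`-space over `k`, as `Proj k[x₀, …, xₙ]`. -/
def ProjSpace (k : Type u) [Field k] (n : ℕ) : Scheme.{u} :=
  AlgebraicGeometry.Proj (MvPolynomial.homogeneousSubmodule (Fin (n + 1)) k)

/-- A scheme is quasi-projective over `k` if it admits an open immersion in some
projective space over `k`. -/
def IsQuasiProjective (k : Type u) [Field k] (X : Scheme.{u}) : Prop :=
  ∃ (n : ℕ) (f : X ⟶ ProjSpace k n), IsOpenImmersion f

/-- A scheme is projective over `k` if it admits a closed immersion in some projective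
space over `k`. -/
def IsProjectiveOver (k : Type u) [Field k] (X : Scheme.{u}) : Prop :=
  ∃ (n : ℕ) (f : X ⟶ ProjSpace k n), IsClosedImmersion f

/-- A scheme is quasi-affine if it admits an open immersion in an affine scheme. -/
def IsQuasiAffine (X : Scheme.{u}) : Prop :=
  ∃ (Y : Scheme.{u}) (f : X ⟶ Y), IsAffine Y ∧ IsOpenImmersion f

/-- `T` is a form of the multiplicative group `k*`: its underlying scheme is isomorphic to
`Spec k[t,t⁻¹]`, and `φ` identifies its group of `k`-points with `kˣ`. -/
structure GmStructure (T : GrpObjK k) where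
  schemeIso : T.toMon.X.left ≅ Spec (CommRingCat.of (LaurentPolynomial k))
  φ : kpt T.toMon.X → kˣ
  φ_bijective : Function.Bijective φ
  φ_mul : ∀ x y, φ (prod.lift x y ≫ T.toMon.mon.mul) = φ x * φ y
  φ_one : φ T.toMon.mon.one = 1

/-- The scheme morphism `Spec k ⟶ V.left` underlying a `k`-point. -/
def ptHom {V : SchK k} (x : kpt V) : SpecK k ⟶ V.left :=
  (terminal.from (Over.mk (𝟙 (SpecK k))) ≫ x).left

/-- Evaluation of a global regular function at a `k`-point. -/
def evalPt {V : SchK k} (x : kpt V) (f : Γ(V.left, ⊤)) : k :=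
  (Scheme.ΓSpecIso (CommRingCat.of k)).hom ((ptHom x).appTop f)

/-- The structural ring homomorphism `k ⟶ Γ(V, O_V)`. -/
def structureRingHom (V : SchK k) : CommRingCat.of k ⟶ Γ(V.left, ⊤) :=
  (Scheme.ΓSpecIso (CommRingCat.of k)).inv ≫ V.hom.appTop

/-- The affine line over `k`, as an object of `SchK k`. -/
def AffLineOver (k : Type u) [Field k] [IsAlgClosed k] : SchK k :=
  Over.mk (Spec.map (CommRingCat.ofHom (algebraMap k (Polynomial k))))

/-- The (total space of a) line bundle on a `k`-scheme `V`: a scheme `tot` over `V`, with a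
zero section, a fibrewise scalar action of the multiplicative group `T`, locally trivial
over `V` with fibre the affine line. -/
structure LineBundle (T : GrpObjK k) (V : SchK k) where
  tot : SchK k
  π : tot ⟶ V
  zero : V ⟶ tot
  zero_π : zero ≫ π = 𝟙 V
  scalar : GrpAction T tot
  scalar_π : scalar.act ≫ π = prod.snd ≫ π
  zero_fixed : prod.map (𝟙 T.toMon.X) zero ≫ scalar.act = prod.snd ≫ zero
  locTriv : ∀ p : V.left, ∃ (U : V.left.Opens) (_ : p ∈ U)
    (e : (π.left ⁻¹ᵁ U).toScheme ≅ pullback (U.ι ≫ V.hom) (AffLineOver k).hom),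
    e.hom ≫ pullback.fst _ _ = π.left ∣_ U

/-- A global function on the total space of a line bundle is homogeneous of degree `n`
(i.e. is a section of the `n`-th power of the dual bundle). -/
def Homog {T : GrpObjK k} {V : SchK k} (gm : GmStructure T) (L : LineBundle T V)
    (n : ℕ) (f : Γ(L.tot.left, ⊤)) : Prop :=
  ∀ (s : kpt T.toMon.X) (t : kpt L.tot),
    evalPt (L.scalar.ptAct s t) f = ((gm.φ s : k) ^ n) * evalPt t f

/-- The dual of the line bundle `L` is ample: the affine non-vanishing loci of homogeneous
functions of positive degree on the total space of `L` cover `V`. -/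
def IsDualAmple {T : GrpObjK k} {V : SchK k} (gm : GmStructure T) (L : LineBundle T V) : Prop :=
  ∀ p : V.left, ∃ (n : ℕ) (f : Γ(L.tot.left, ⊤)) (U : V.left.Opens),
    0 < n ∧ Homog gm L n f ∧ p ∈ U ∧ IsAffineOpen U ∧
    (U : Set V.left) = L.π.left.base '' (L.tot.left.basicOpen f : Set L.tot.left)

/-- A `(G × G)`-linearization of a line bundle `L` on a `(G × G)`-variety `V`: a lift of the
two-sided action to the total space, commuting with the scalar action. -/
structure Linearization {G : GrpObjK k} {T : GrpObjK k} {V : SchK k}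
    (A : TwoSidedAction G V) (L : LineBundle T V) where
  lift : TwoSidedAction G L.tot
  π_equiv_l : lift.l.act ≫ L.π = prod.map (𝟙 G.toMon.X) L.π ≫ A.l.act
  π_equiv_r : lift.r.act ≫ L.π = prod.map (𝟙 G.toMon.X) L.π ≫ A.r.act
  linear_l : ∀ (g : kpt G.toMon.X) (s : kpt T.toMon.X) (t : kpt L.tot),
    lift.l.ptAct g (L.scalar.ptAct s t) = L.scalar.ptAct s (lift.l.ptAct g t)
  linear_r : ∀ (g : kpt G.toMon.X) (s : kpt T.toMon.X) (t : kpt L.tot),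
    lift.r.ptAct g (L.scalar.ptAct s t) = L.scalar.ptAct s (lift.r.ptAct g t)

/-- A `G`-embedding: a `k`-scheme `V` with a two-sided `G`-action and an equivariant open
immersion of `G` whose image is the orbit of the unit point. -/
structure GEmbedding (G : AlgGroup k) (V : SchK k) where
  A : TwoSidedAction G.toGrpObjK V
  j : G.toMon.X ⟶ V
  isOpenImmersion : IsOpenImmersion j.left
  equivariant_l : prod.map (𝟙 G.toMon.X) j ≫ A.l.act = G.toMon.mon.mul ≫ j
  equivariant_r : prod.map (𝟙 G.toMon.X) j ≫ A.r.act =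
    (Limits.prod.braiding G.toMon.X G.toMon.X).hom ≫ prod.map (𝟙 G.toMon.X) G.inv ≫
      G.toMon.mon.mul ≫ j
  range_eq : Set.range j.left.base = A.orbitSet (G.toMon.mon.one ≫ j)

/-! A variety has finitely many irreducible components, each containing a nonempty open set
that meets no other component. As the unit group is dense, each component `C` therefore
contains a unit `g` lying in no other component, and the component `D` of `0` contains some
unit `h`. Left translation by `g h⁻¹` maps the irreducible set `D` into a component containing
`g`, hence into `C`; since it fixes `0 ∈ D`, we get `0 ∈ C`. -/

open TopologicalSpace

section Topology

variable {X Y : Type*} [TopologicalSpace X] [TopologicalSpace Y]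

theorem Dense.exists_mem_irreducibleComponent_unique [NoetherianSpace X] {S C : Set X}
    (hS : Dense S) (hC : C ∈ irreducibleComponents X) :
    ∃ p ∈ S, p ∈ C ∧ ∀ W ∈ irreducibleComponents X, p ∈ W → W = C := by
  have hfin := NoetherianSpace.finite_irreducibleComponents (α := X)
  set o := (⋃₀ (irreducibleComponents X \ {C}))ᶜ
  have hclosure : closure o = C := closure_sUnion_irreducibleComponents_sdiff_singleton hfin C hC
  have ho : IsOpen o := by
    refine isOpen_compl_iff.mpr ?_
    rw [Set.sUnion_eq_biUnion]
    exact hfin.sdiff.isClosed_biUnion fun W hW ↦ isClosed_of_mem_irreducibleComponents W hW.1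
  have ho_nonempty : o.Nonempty := closure_nonempty_iff.mp (hclosure ▸ hC.1.nonempty)
  obtain ⟨p, hpo, hpS⟩ := hS.inter_open_nonempty o ho ho_nonempty
  refine ⟨p, hpS, hclosure ▸ subset_closure hpo, fun W hW hpW ↦ ?_⟩
  by_contra hne
  exact hpo ⟨W, ⟨hW, hne⟩, hpW⟩

theorem IsIrreducible.image_subset_of_forall_mem_irreducibleComponents {f : X → Y}
    (hf : Continuous f) {D : Set X} (hD : IsIrreducible D) {C : Set Y} {p : X} (hpD : p ∈ D)
    (hp : ∀ W ∈ irreducibleComponents Y, f p ∈ W → W = C) : f '' D ⊆ C := by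
  obtain ⟨W, hW, hDW⟩ :=
    exists_mem_irreducibleComponents_subset_of_isIrreducible _ (hD.image f hf.continuousOn)
  exact hp W hW (hDW ⟨p, hpD, rfl⟩) ▸ hDW

end Topology

theorem AlgebraicGeometry.noetherianSpace_of_locallyOfFiniteType {X : Scheme}
    {R : CommRingCat} [IsNoetherianRing R] (f : X ⟶ Spec R) [LocallyOfFiniteType f]
    [QuasiCompact f] : NoetherianSpace X := by
  have : IsLocallyNoetherian X := LocallyOfFiniteType.isLocallyNoetherian f
  have : CompactSpace X := (quasiCompact_iff_compactSpace f).mp ‹_›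
  have : IsNoetherian X := ⟨⟩
  infer_instance

namespace AlgMonoid

variable {k : Type u} [Field k] [IsAlgClosed k] (M : AlgMonoid k)

def leftMul (u : kpt M.toMon.X) : M.toMon.X ⟶ M.toMon.X :=
  prod.lift (terminal.from M.toMon.X ≫ u) (𝟙 _) ≫ M.toMon.mon.mul

theorem comp_leftMul (u m : kpt M.toMon.X) : m ≫ M.leftMul u = M.ptMul u m := by
  dsimp only [leftMul, ptMul]
  erw [← Category.assoc, prod.comp_lift, Category.comp_id, ← Category.assoc,
    show m ≫ terminal.from M.toMon.X = 𝟙 _ from terminal.hom_ext _ _, Category.id_comp]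

theorem basePt_ptMul (u m : kpt M.toMon.X) :
    basePt (M.ptMul u m) = (M.leftMul u).left.base (basePt m) := by
  rw [← comp_leftMul]
  rfl

theorem ptMul_assoc (a b c : kpt M.toMon.X) :
    M.ptMul (M.ptMul a b) c = M.ptMul a (M.ptMul b c) :=
  MonObj.lift_lift_assoc a b c

theorem ptMul_ptOne (a : kpt M.toMon.X) : M.ptMul a M.ptOne = a := by
  have h := MonObj.lift_comp_one_right a (𝟙 _)
  rwa [Category.id_comp] at h

instance noetherianSpace : NoetherianSpace M.toMon.X.left :=
  @noetherianSpace_of_locallyOfFiniteType _ (CommRingCat.of k) _ M.toMon.X.hom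
    M.isVariety.locallyOfFiniteType M.isVariety.quasiCompact

end AlgMonoid

/-- If an algebraic monoid `M` has a zero and its unit group is dense,
then every irreducible component of `M` contains the zero. -/
theorem zero_in_every_component
    {k : Type u} [Field k] [IsAlgClosed k] (M : AlgMonoid k)
    (hdense : Dense M.unitSet) (z : kpt M.toMon.X) (hz : M.IsZeroPt z) :
    ∀ C ∈ irreducibleComponents M.toMon.X.left, basePt z ∈ C := by
  intro C hC
  obtain ⟨_, ⟨g, -, rfl⟩, -, hg_only⟩ := hdense.exists_mem_irreducibleComponent_unique hC
  obtain ⟨_, ⟨h, ⟨h', -, hh'h⟩, rfl⟩, hhD, -⟩ := hdense.exists_mem_irreducibleComponent_unique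
    (irreducibleComponent_mem_irreducibleComponents (basePt z))
  set t := (M.leftMul (M.ptMul g h')).left.base
  have ht_h : t (basePt h) = basePt g := by
    rw [← M.basePt_ptMul, M.ptMul_assoc, hh'h, M.ptMul_ptOne]
  have ht_z : t (basePt z) = basePt z := by
    rw [← M.basePt_ptMul, (hz _).1]
  have hD_C : t '' irreducibleComponent (basePt z) ⊆ C :=
    isIrreducible_irreducibleComponent.image_subset_of_forall_mem_irreducibleComponents
      t.hom.continuous hhD (ht_h ▸ hg_only)
  exact ht_z ▸ hD_C ⟨_, mem_irreducibleComponent, rfl⟩
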